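/- Suppose (𝒳, S, γ, (Λ_a)_{a∈A}) is a spectral decomposition system for a Euclidean space 𝔥 with {Λ_a : a ∈ A} closed in L(𝒳,𝔥). Let φ : 𝒳 → [−∞,+∞] be S-invariant, let x, y ∈ 𝒳, and let a ∈ A. Then y ∈ ∂_F φ(x) if and only if Λ_a y ∈ ∂_F(φ∘γ)(Λ_a x). -/

import Mathlib

/-!
Axiom [C] together with `‖γ X‖ = ‖X‖` makes `γ` and `τ = γ ∘ Λ_a` nonexpansive, and shows that
over an orbit `S • p` the inner product with a vector `γ X` is largest at `τ p`.

Since `φ ∘ γ ∘ Λ_a = φ ∘ τ = φ`, a Fréchet subgradient of `φ ∘ γ` at `Λ_a x` pulls back along the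
isometry `Λ_a`. Conversely, let `y ∈ ∂_F φ(x)` and `Z` be at distance `t > 0` from `Λ_a x`. Apply
[C] to `Z` and `Λ_a (x + ρ y)` with `ρ = t / (2ε)`, and pick `s` with `τ (x + ρ y) = s • (x + ρ y)`.
The point `z = s⁻¹ • γ Z` lies in the orbit of `γ Z`, so `φ z = φ (γ Z)`; it is at distance
`O(t)` from `x`, and `⟪Z - Λ_a x, Λ_a y⟫ ≤ ⟪z - x, y⟫ + ε t`. The subgradient inequality of
`φ` at `x`, evaluated at `z`, then gives the one of `φ ∘ γ` at `Λ_a x`, evaluated at `Z`.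
-/

open Filter Topology Set Metric
open scoped RealInnerProductSpace

noncomputable section

/-- A spectral decomposition system `(𝒳, S, γ, (Λ_a)_{a ∈ A})` for the space `H`:
`S` acts on `𝒳` by linear isometries (via `act`), `γ : H → 𝒳` is the spectral
mapping, each `Λ a : 𝒳 → H` is a linear isometry, and the axioms [A], [B], [C] hold,
with `τ` the `S`-invariant ordering mapping of axiom [A]. -/
structure SDS (𝒳 H : Type*) [NormedAddCommGroup 𝒳] [InnerProductSpace ℝ 𝒳]
    [NormedAddCommGroup H] [InnerProductSpace ℝ H]
    (S : Type*) [Group S] (A : Type*) where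
  act : S →* (𝒳 ≃ₗᵢ[ℝ] 𝒳)
  γ : H → 𝒳
  Λ : A → 𝒳 →ₗᵢ[ℝ] H
  τ : 𝒳 → 𝒳
  τ_inv : ∀ (s : S) (x : 𝒳), τ (act s x) = τ x
  τ_orbit : ∀ x : 𝒳, ∃ s : S, τ x = act s x
  γΛ : ∀ (a : A) (x : 𝒳), γ (Λ a x) = τ x
  decomp : ∀ X : H, ∃ a : A, X = Λ a (γ X)
  inner_le : ∀ X Y : H, ⟪X, Y⟫ ≤ ⟪γ X, γ Y⟫

variable {𝒳 H S A : Type*} [NormedAddCommGroup 𝒳] [InnerProductSpace ℝ 𝒳]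
    [NormedAddCommGroup H] [InnerProductSpace ℝ H] [Group S]

/-- The set `{Λ_a : a ∈ A}`, regarded as a subset of the space `L(𝒳, H)` of
continuous linear maps with the operator norm. -/
def SDS.LambdaSet (𝔖 : SDS 𝒳 H S A) : Set (𝒳 →L[ℝ] H) :=
  {L | ∃ a : A, L = (𝔖.Λ a).toContinuousLinearMap}

/-- `A_X = {a ∈ A : X = Λ_a (γ X)}`. -/
def SDS.AX (𝔖 : SDS 𝒳 H S A) (X : H) : Set A := {a | X = 𝔖.Λ a (𝔖.γ X)}

/-- The Fréchet subdifferential of an extended-real-valued `f` at `x`: empty unless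
`f x` is finite, in which case it is the set of `y` with
`liminf_{z → x, z ≠ x} (f(z) - f(x) - ⟨z - x, y⟩)/‖z - x‖ ≥ 0`, in ε-δ form. -/
def fSubdiff {E : Type*} [NormedAddCommGroup E] [InnerProductSpace ℝ E]
    (f : E → EReal) (x : E) : Set E :=
  {y | (∃ r : ℝ, f x = (r : EReal)) ∧ ∀ ε : ℝ, 0 < ε → ∃ δ : ℝ, 0 < δ ∧
    ∀ z : E, ‖z - x‖ < δ → f x + ((⟪z - x, y⟫ - ε * ‖z - x‖ : ℝ) : EReal) ≤ f z}

section FrechetSubdifferential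

variable {E F : Type*} [NormedAddCommGroup E] [InnerProductSpace ℝ E]
  [NormedAddCommGroup F] [InnerProductSpace ℝ F]

theorem mem_fSubdiff_comp_linearIsometry (L : E →ₗᵢ[ℝ] F) {f : F → EReal} {x y : E}
    (h : L y ∈ fSubdiff f (L x)) : y ∈ fSubdiff (fun z => f (L z)) x := by
  obtain ⟨hfin, hsub⟩ := h
  refine ⟨hfin, fun ε hε => ?_⟩
  obtain ⟨δ, hδ, hle⟩ := hsub ε hε
  refine ⟨δ, hδ, fun z hz => ?_⟩
  have := hle (L z) (by rwa [← map_sub, L.norm_map])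
  rwa [← map_sub, L.inner_map_map, L.norm_map] at this

theorem mem_fSubdiff_of_forall_exists {g : E → EReal} {f : F → EReal} {x₀ y : E} {X₀ Y : F}
    (hy : y ∈ fSubdiff g x₀) (hfg : f X₀ = g x₀)
    (hmatch : ∀ ε > 0, ∃ C > 0, ∀ Z ≠ X₀, ∃ z, ‖z - x₀‖ ≤ C * ‖Z - X₀‖ ∧ g z ≤ f Z ∧
      ⟪Z - X₀, Y⟫ ≤ ⟪z - x₀, y⟫ + ε * ‖Z - X₀‖) :
    Y ∈ fSubdiff f X₀ := by
  obtain ⟨⟨r, hr⟩, hsub⟩ := hy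
  refine ⟨⟨r, hfg.trans hr⟩, fun ε hε => ?_⟩
  obtain ⟨C, hC, hmatchε⟩ := hmatch (ε / 2) (half_pos hε)
  obtain ⟨δ, hδ, hle⟩ := hsub (ε / (2 * C)) (by positivity)
  refine ⟨δ / C, by positivity, fun Z hZ => ?_⟩
  rcases eq_or_ne Z X₀ with rfl | hZX₀
  · simp
  obtain ⟨z, hzdist, hgf, hinner⟩ := hmatchε Z hZX₀
  have hzδ : ‖z - x₀‖ < δ := hzdist.trans_lt ((lt_div_iff₀' hC).mp hZ)
  have hslope : ε / (2 * C) * ‖z - x₀‖ ≤ ε / 2 * ‖Z - X₀‖ := by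
    calc ε / (2 * C) * ‖z - x₀‖ ≤ ε / (2 * C) * (C * ‖Z - X₀‖) := by gcongr
      _ = ε / 2 * ‖Z - X₀‖ := by field_simp
  calc f X₀ + ((⟪Z - X₀, Y⟫ - ε * ‖Z - X₀‖ : ℝ) : EReal)
      ≤ g x₀ + ((⟪z - x₀, y⟫ - ε / (2 * C) * ‖z - x₀‖ : ℝ) : EReal) := by
        rw [hfg]
        exact add_le_add_right (EReal.coe_le_coe_iff.mpr (by linarith)) _
    _ ≤ g z := hle z hzδ
    _ ≤ f Z := hgf

end FrechetSubdifferential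

namespace SDS

variable (𝔖 : SDS 𝒳 H S A)

theorem norm_γ (X : H) : ‖𝔖.γ X‖ = ‖X‖ := by
  obtain ⟨b, hb⟩ := 𝔖.decomp X
  conv_rhs => rw [hb, (𝔖.Λ b).norm_map]

theorem τ_γ (X : H) : 𝔖.τ (𝔖.γ X) = 𝔖.γ X := by
  obtain ⟨b, hb⟩ := 𝔖.decomp X
  rw [← 𝔖.γΛ b, ← hb]

theorem inner_le_inner_τ (p q : 𝒳) : ⟪p, q⟫ ≤ ⟪𝔖.τ p, 𝔖.τ q⟫ := by
  obtain ⟨a, -⟩ := 𝔖.decomp 0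
  simpa only [𝔖.γΛ, LinearIsometry.inner_map_map] using 𝔖.inner_le (𝔖.Λ a p) (𝔖.Λ a q)

theorem inner_γ_act_le (X : H) (s : S) (p : 𝒳) : ⟪𝔖.γ X, 𝔖.act s p⟫ ≤ ⟪𝔖.γ X, 𝔖.τ p⟫ := by
  simpa only [τ_γ, τ_inv] using 𝔖.inner_le_inner_τ (𝔖.γ X) (𝔖.act s p)

theorem inner_γ_sub_inner (X Y : H) :
    ⟪𝔖.γ X, 𝔖.γ Y⟫ - ⟪X, Y⟫ = (‖X - Y‖ ^ 2 - ‖𝔖.γ X - 𝔖.γ Y‖ ^ 2) / 2 := by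
  rw [norm_sub_sq_real, norm_sub_sq_real, norm_γ, norm_γ]
  ring

theorem norm_γ_sub_γ_le (X Y : H) : ‖𝔖.γ X - 𝔖.γ Y‖ ≤ ‖X - Y‖ := by
  have hgap := 𝔖.inner_γ_sub_inner X Y
  have hC := 𝔖.inner_le X Y
  exact pow_le_pow_iff_left₀ (norm_nonneg _) (norm_nonneg _) two_ne_zero |>.mp (by linarith)

theorem norm_τ_sub_τ_le (p q : 𝒳) : ‖𝔖.τ p - 𝔖.τ q‖ ≤ ‖p - q‖ := by
  obtain ⟨a, -⟩ := 𝔖.decomp 0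
  simpa only [γΛ, ← map_sub, LinearIsometry.norm_map] using
    𝔖.norm_γ_sub_γ_le (𝔖.Λ a p) (𝔖.Λ a q)

theorem comp_γ_Λ_of_invariant {β : Type*} {φ : 𝒳 → β}
    (hφ : ∀ (s : S) (p : 𝒳), φ (𝔖.act s p) = φ p) (a : A) (p : 𝒳) :
    φ (𝔖.γ (𝔖.Λ a p)) = φ p := by
  obtain ⟨s, hs⟩ := 𝔖.τ_orbit p
  rw [γΛ, hs, hφ]

variable {𝔖} (a : A) {x y z : 𝒳} {Z : H} {ρ : ℝ} {c : S}

theorem norm_sub_le_of_act_eq_γ (hρ : 0 ≤ ρ) (hc : 𝔖.τ (x + ρ • y) = 𝔖.act c (x + ρ • y))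
    (hz : 𝔖.act c z = 𝔖.γ Z) : ‖z - x‖ ≤ ‖Z - 𝔖.Λ a x‖ + 2 * ρ * ‖y‖ := by
  have hρy : ‖ρ • y‖ = ρ * ‖y‖ := by rw [norm_smul, Real.norm_of_nonneg hρ]
  have h₁ : ‖𝔖.γ Z - 𝔖.τ x‖ ≤ ‖Z - 𝔖.Λ a x‖ := by
    simpa only [γΛ] using 𝔖.norm_γ_sub_γ_le Z (𝔖.Λ a x)
  have h₂ : ‖𝔖.τ x - 𝔖.τ (x + ρ • y)‖ ≤ ρ * ‖y‖ := by
    simpa [hρy] using 𝔖.norm_τ_sub_τ_le x (x + ρ • y)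
  have h₃ : ‖𝔖.τ (x + ρ • y) - 𝔖.act c x‖ = ρ * ‖y‖ := by
    rw [hc, ← map_sub, LinearIsometryEquiv.norm_map, add_sub_cancel_left, hρy]
  have h₄ := norm_sub_le_norm_sub_add_norm_sub (𝔖.γ Z) (𝔖.τ x) (𝔖.act c x)
  have h₅ := norm_sub_le_norm_sub_add_norm_sub (𝔖.τ x) (𝔖.τ (x + ρ • y)) (𝔖.act c x)
  have hzx : ‖z - x‖ = ‖𝔖.γ Z - 𝔖.act c x‖ := by
    rw [← hz, ← map_sub, LinearIsometryEquiv.norm_map]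
  linarith

theorem inner_sub_le_of_act_eq_γ (hc : 𝔖.τ (x + ρ • y) = 𝔖.act c (x + ρ • y))
    (hz : 𝔖.act c z = 𝔖.γ Z) :
    ρ * ⟪Z - 𝔖.Λ a x, 𝔖.Λ a y⟫ ≤ ρ * ⟪z - x, y⟫ + ‖Z - 𝔖.Λ a x‖ ^ 2 / 2 := by
  have hfan : ⟪Z, 𝔖.Λ a x⟫ + ρ * ⟪Z, 𝔖.Λ a y⟫ ≤ ⟪𝔖.γ Z, 𝔖.act c x⟫ + ρ * ⟪z, y⟫ := by
    rw [← (𝔖.act c).inner_map_map z y, hz]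
    have h := 𝔖.inner_le Z (𝔖.Λ a (x + ρ • y))
    rw [γΛ, hc] at h
    simpa only [map_add, map_smul, inner_add_right, real_inner_smul_right] using h
  have horbit := 𝔖.inner_γ_act_le Z c x
  have hgap := 𝔖.inner_γ_sub_inner Z (𝔖.Λ a x)
  rw [γΛ] at hgap
  have := sq_nonneg ‖𝔖.γ Z - 𝔖.τ x‖
  rw [inner_sub_left, inner_sub_left, LinearIsometry.inner_map_map]
  linarith

theorem exists_act_γ_near {ε : ℝ} (hε : 0 < ε) (hZ : Z ≠ 𝔖.Λ a x) :
    ∃ s : S, ‖𝔖.act s (𝔖.γ Z) - x‖ ≤ (1 + ‖y‖ / ε) * ‖Z - 𝔖.Λ a x‖ ∧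
      ⟪Z - 𝔖.Λ a x, 𝔖.Λ a y⟫ ≤ ⟪𝔖.act s (𝔖.γ Z) - x, y⟫ + ε * ‖Z - 𝔖.Λ a x‖ := by
  set t := ‖Z - 𝔖.Λ a x‖
  have ht : 0 < t := norm_sub_pos_iff.mpr hZ
  set ρ := t / (2 * ε) with hρ_def
  have hρ : 0 < ρ := by positivity
  obtain ⟨c, hc⟩ := 𝔖.τ_orbit (x + ρ • y)
  have hz : 𝔖.act c (𝔖.act c⁻¹ (𝔖.γ Z)) = 𝔖.γ Z := by simp [LinearIsometryEquiv.coe_inv]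
  refine ⟨c⁻¹, ?_, ?_⟩
  · calc _ ≤ t + 2 * ρ * ‖y‖ := norm_sub_le_of_act_eq_γ a hρ.le hc hz
      _ = _ := by rw [hρ_def]; field_simp
  · have h := inner_sub_le_of_act_eq_γ a hc hz
    rw [← mul_le_mul_iff_of_pos_left hρ]
    have : ρ * (ε * t) = t ^ 2 / 2 := by rw [hρ_def]; field_simp
    linarith

end SDS

theorem frechet_subdiff_lambda_iff_general
    (𝔖 : SDS 𝒳 H S A)
    (φ : 𝒳 → EReal) (hφ : ∀ (s : S) (x : 𝒳), φ (𝔖.act s x) = φ x)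
    (x y : 𝒳) (a : A) :
    y ∈ fSubdiff φ x ↔ 𝔖.Λ a y ∈ fSubdiff (fun Z => φ (𝔖.γ Z)) (𝔖.Λ a x) := by
  have hφΛ := 𝔖.comp_γ_Λ_of_invariant hφ a
  constructor
  · intro hy
    refine mem_fSubdiff_of_forall_exists hy (hφΛ x) fun ε hε =>
      ⟨1 + ‖y‖ / ε, by positivity, fun Z hZ => ?_⟩
    obtain ⟨s, hdist, hinner⟩ := SDS.exists_act_γ_near a hε hZ
    exact ⟨_, hdist, (hφ s _).le, hinner⟩
  · intro h
    simpa only [hφΛ] using mem_fSubdiff_comp_linearIsometry (𝔖.Λ a) h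

/-- For an `S`-invariant `φ : 𝒳 → [-∞, +∞]`, `x, y ∈ 𝒳` and `a ∈ A`:
`y ∈ ∂_F φ(x)` iff `Λ_a y ∈ ∂_F(φ ∘ γ)(Λ_a x)`. -/
theorem frechet_subdiff_lambda_iff
    [FiniteDimensional ℝ 𝒳] [FiniteDimensional ℝ H]
    (𝔖 : SDS 𝒳 H S A) (hcl : IsClosed 𝔖.LambdaSet)
    (φ : 𝒳 → EReal) (hφ : ∀ (s : S) (x : 𝒳), φ (𝔖.act s x) = φ x)
    (x y : 𝒳) (a : A) :
    y ∈ fSubdiff φ x ↔ 𝔖.Λ a y ∈ fSubdiff (fun Z => φ (𝔖.γ Z)) (𝔖.Λ a x) :=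
  frechet_subdiff_lambda_iff_general 𝔖 φ hφ x y a
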